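/- arXiv:2306.08242 — 7 statements merged into one kernel-verified Lean document; each statement's English description precedes it below -/
import Mathlib

section
/- The vector g = (1/√2)·√(1−h/r)·e₀ − (1/√2)·√(1+h/r)·e₃ is a unit vector in ℂ⁴ and satisfies H·g = 0, where H is the minimal QET Hamiltonian; in particular ⟨g|H|g⟩ = 0. -/
open Matrix Kronecker
open scoped ComplexOrder

noncomputable section

abbrev M2 : Type := Matrix (Fin 2) (Fin 2) ℂ
abbrev M4 : Type := Matrix (Fin 2 × Fin 2) (Fin 2 × Fin 2) ℂ

/-- Pauli X matrix. -/
def σx : M2 := !![0, 1; 1, 0]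
/-- Pauli Y matrix. -/
def σy : M2 := !![0, -Complex.I; Complex.I, 0]
/-- Pauli Z matrix. -/
def σz : M2 := !![1, 0; 0, -1]

def X1 : M4 := σx ⊗ₖ (1 : M2)
def Z1 : M4 := σz ⊗ₖ (1 : M2)
def Z2 : M4 := (1 : M2) ⊗ₖ σz
def Y2 : M4 := (1 : M2) ⊗ₖ σy
def XX : M4 := σx ⊗ₖ σx

def H1m (k h : ℝ) : M4 := (h : ℂ) • Z1 + ((h ^ 2 / Real.sqrt (h ^ 2 + k ^ 2) : ℝ) : ℂ) • (1 : M4)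
def H2m (k h : ℝ) : M4 := (h : ℂ) • Z2 + ((h ^ 2 / Real.sqrt (h ^ 2 + k ^ 2) : ℝ) : ℂ) • (1 : M4)
def Vm (k h : ℝ) : M4 :=
  ((2 * k : ℝ) : ℂ) • XX + ((2 * k ^ 2 / Real.sqrt (h ^ 2 + k ^ 2) : ℝ) : ℂ) • (1 : M4)
def Hm (k h : ℝ) : M4 := H1m k h + H2m k h + Vm k h

def e00 : (Fin 2 × Fin 2) → ℂ := fun p => if p = (0, 0) then 1 else 0
def e11 : (Fin 2 × Fin 2) → ℂ := fun p => if p = (1, 1) then 1 else 0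

/-- the ground state of the minimal QET Hamiltonian -/
def gs (k h : ℝ) : (Fin 2 × Fin 2) → ℂ := fun p =>
  ((1 / Real.sqrt 2 * Real.sqrt (1 - h / Real.sqrt (h ^ 2 + k ^ 2)) : ℝ) : ℂ) * e00 p
  - ((1 / Real.sqrt 2 * Real.sqrt (1 + h / Real.sqrt (h ^ 2 + k ^ 2)) : ℝ) : ℂ) * e11 p

/-- the rank-one operator |g⟩⟨g| -/
def gProj (k h : ℝ) : M4 := Matrix.vecMulVec (gs k h) (star (gs k h))

/-- Alice's projective measurement operator -/
def PA (μ : ℝ) : M4 := (2 : ℂ)⁻¹ • ((1 : M4) + (μ : ℂ) • X1)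

/-- Bob's conditional unitary -/
def UB (ν θ : ℝ) : M4 :=
  ((Real.cos θ : ℝ) : ℂ) • (1 : M4) - ((Complex.I * ν * Real.sin θ) : ℂ) • Y2

/-- the post-protocol state -/
def ρQET (k h θ : ℝ) : M4 :=
  UB (-1) θ * PA (-1) * gProj k h * PA (-1) * (UB (-1) θ)ᴴ
  + UB 1 θ * PA 1 * gProj k h * PA 1 * (UB 1 θ)ᴴ

/-- the normalized post-measurement state with prover outcome μ and verifier operation UB ν θ -/
def ρMN (k h μ ν θ : ℝ) : M4 := (2 : ℂ) • (UB ν θ * PA μ * gProj k h * PA μ * (UB ν θ)ᴴ)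

/-! On span{e₀, e₃} the Pauli terms act diagonally (`Z₁ + Z₂ = diag(2, -2)`), `X ⊗ X` swaps the two
vectors, and the constant shifts add up to `2(h² + k²)/r = 2r`; so `H` restricts to
`2 • !![r + h, k; k, r - h]`, whose determinant is `4(r² - h² - k²) = 0`. Its kernel is spanned by the
vector `g`: writing `t = h / r ∈ [-1, 1]`, one has `h = r t` and `k = r √(1 - t) √(1 + t)`, and both
rows of `H g = 0` become `√(1 ± t)² = 1 ± t`. -/

lemma abs_div_sqrt_sq_add_sq_le_one (h k : ℝ) : |h / √(h ^ 2 + k ^ 2)| ≤ 1 := by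
  rw [abs_div, abs_of_nonneg (Real.sqrt_nonneg _)]
  exact div_le_one_of_le₀ (Real.abs_le_sqrt (by nlinarith)) (Real.sqrt_nonneg _)

lemma sqrt_sq_add_sq_mul_div (h k : ℝ) : √(h ^ 2 + k ^ 2) * (h / √(h ^ 2 + k ^ 2)) = h := by
  rcases (Real.sqrt_nonneg (h ^ 2 + k ^ 2)).eq_or_lt with hr | hr
  · rw [eq_comm, Real.sqrt_eq_zero'] at hr
    obtain rfl : h = 0 := by nlinarith
    simp
  · exact mul_div_cancel₀ h hr.ne'

lemma sqrt_mul_sqrt_one_sub_div_mul_sqrt_one_add_div {k : ℝ} (h : ℝ) (hk : 0 ≤ k) :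
    √(h ^ 2 + k ^ 2) * √(1 - h / √(h ^ 2 + k ^ 2)) * √(1 + h / √(h ^ 2 + k ^ 2)) = k := by
  obtain ⟨ht₁, ht₂⟩ := abs_le.mp (abs_div_sqrt_sq_add_sq_le_one h k)
  have hr2 : √(h ^ 2 + k ^ 2) ^ 2 = h ^ 2 + k ^ 2 := Real.sq_sqrt (by positivity)
  refine (pow_left_inj₀ (by positivity) hk two_ne_zero).mp ?_
  rw [mul_pow, mul_pow, Real.sq_sqrt (x := 1 - _) (by linarith),
    Real.sq_sqrt (x := 1 + _) (by linarith)]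
  linear_combination
    hr2 - (√(h ^ 2 + k ^ 2) * (h / √(h ^ 2 + k ^ 2)) + h) * sqrt_sq_add_sq_mul_div h k

def gsAmp00 (k h : ℝ) : ℝ := 1 / √2 * √(1 - h / √(h ^ 2 + k ^ 2))

def gsAmp11 (k h : ℝ) : ℝ := 1 / √2 * √(1 + h / √(h ^ 2 + k ^ 2))

lemma gsAmp00_sq_add_gsAmp11_sq (k h : ℝ) : gsAmp00 k h ^ 2 + gsAmp11 k h ^ 2 = 1 := by
  obtain ⟨ht₁, ht₂⟩ := abs_le.mp (abs_div_sqrt_sq_add_sq_le_one h k)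
  rw [gsAmp00, gsAmp11, mul_pow, mul_pow, div_pow, Real.sq_sqrt zero_le_two,
    Real.sq_sqrt (by linarith), Real.sq_sqrt (by linarith)]
  ring

lemma sqrt_add_mul_gsAmp00_eq_mul_gsAmp11 {k : ℝ} (h : ℝ) (hk : 0 ≤ k) :
    (√(h ^ 2 + k ^ 2) + h) * gsAmp00 k h = k * gsAmp11 k h := by
  obtain ⟨ht, -⟩ := abs_le.mp (abs_div_sqrt_sq_add_sq_le_one h k)
  have hu := Real.sq_sqrt (x := 1 + h / √(h ^ 2 + k ^ 2)) (by linarith)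
  have hk' := sqrt_mul_sqrt_one_sub_div_mul_sqrt_one_add_div h hk
  have hh := sqrt_sq_add_sq_mul_div h k
  rw [gsAmp00, gsAmp11]
  set r := √(h ^ 2 + k ^ 2)
  set s := √(1 - h / r)
  set u := √(1 + h / r)
  linear_combination (1 / √2 * u) * hk' - (1 / √2 * s) * hh - (r * (1 / √2) * s) * hu

lemma mul_gsAmp00_eq_sqrt_sub_mul_gsAmp11 {k : ℝ} (h : ℝ) (hk : 0 ≤ k) :
    k * gsAmp00 k h = (√(h ^ 2 + k ^ 2) - h) * gsAmp11 k h := by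
  obtain ⟨-, ht⟩ := abs_le.mp (abs_div_sqrt_sq_add_sq_le_one h k)
  have hs := Real.sq_sqrt (x := 1 - h / √(h ^ 2 + k ^ 2)) (by linarith)
  have hk' := sqrt_mul_sqrt_one_sub_div_mul_sqrt_one_add_div h hk
  have hh := sqrt_sq_add_sq_mul_div h k
  rw [gsAmp00, gsAmp11]
  set r := √(h ^ 2 + k ^ 2)
  set s := √(1 - h / r)
  set u := √(1 + h / r)
  linear_combination -(1 / √2 * s) * hk' - (1 / √2 * u) * hh + (r * (1 / √2) * u) * hs

lemma gs_eq_smul_sub_smul (k h : ℝ) :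
    gs k h = (gsAmp00 k h : ℂ) • e00 - (gsAmp11 k h : ℂ) • e11 :=
  rfl

lemma Z1_mulVec_e00 : Z1 *ᵥ e00 = e00 := by
  ext ⟨i, j⟩; fin_cases i <;> fin_cases j <;> simp [Z1, σz, e00, mulVec, dotProduct]

lemma Z1_mulVec_e11 : Z1 *ᵥ e11 = -e11 := by
  ext ⟨i, j⟩; fin_cases i <;> fin_cases j <;> simp [Z1, σz, e11, mulVec, dotProduct]

lemma Z2_mulVec_e00 : Z2 *ᵥ e00 = e00 := by
  ext ⟨i, j⟩; fin_cases i <;> fin_cases j <;> simp [Z2, σz, e00, mulVec, dotProduct]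

lemma Z2_mulVec_e11 : Z2 *ᵥ e11 = -e11 := by
  ext ⟨i, j⟩; fin_cases i <;> fin_cases j <;> simp [Z2, σz, e11, mulVec, dotProduct]

lemma XX_mulVec_e00 : XX *ᵥ e00 = e11 := by
  ext ⟨i, j⟩; fin_cases i <;> fin_cases j <;> simp [XX, σx, e00, e11, mulVec, dotProduct]

lemma XX_mulVec_e11 : XX *ᵥ e11 = e00 := by
  ext ⟨i, j⟩; fin_cases i <;> fin_cases j <;> simp [XX, σx, e00, e11, mulVec, dotProduct]

lemma star_smul_e00_sub_smul_e11_dotProduct (α β : ℝ) :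
    star ((α : ℂ) • e00 - (β : ℂ) • e11) ⬝ᵥ ((α : ℂ) • e00 - (β : ℂ) • e11)
      = ((α ^ 2 + β ^ 2 : ℝ) : ℂ) := by
  simp [dotProduct, Fintype.sum_prod_type, e00, e11, sq]

lemma Hm_eq (k h : ℝ) :
    Hm k h = (h : ℂ) • (Z1 + Z2) + ((2 * k : ℝ) : ℂ) • XX +
      ((2 * √(h ^ 2 + k ^ 2) : ℝ) : ℂ) • (1 : M4) := by
  have hconst :
      h ^ 2 / √(h ^ 2 + k ^ 2) + h ^ 2 / √(h ^ 2 + k ^ 2) + 2 * k ^ 2 / √(h ^ 2 + k ^ 2) =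
        2 * √(h ^ 2 + k ^ 2) := by
    have h_div := mul_self_div_self √(h ^ 2 + k ^ 2)
    rw [Real.mul_self_sqrt (by positivity)] at h_div
    linear_combination 2 * h_div
  rw [Hm, H1m, H2m, Vm, ← hconst]
  push_cast
  module

lemma Hm_mulVec_e00 (k h : ℝ) :
    Hm k h *ᵥ e00 =
      ((2 * (√(h ^ 2 + k ^ 2) + h) : ℝ) : ℂ) • e00 + ((2 * k : ℝ) : ℂ) • e11 := by
  rw [Hm_eq]
  simp only [add_mulVec, smul_mulVec, one_mulVec, Z1_mulVec_e00, Z2_mulVec_e00, XX_mulVec_e00]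
  push_cast
  module

lemma Hm_mulVec_e11 (k h : ℝ) :
    Hm k h *ᵥ e11 =
      ((2 * k : ℝ) : ℂ) • e00 + ((2 * (√(h ^ 2 + k ^ 2) - h) : ℝ) : ℂ) • e11 := by
  rw [Hm_eq]
  simp only [add_mulVec, smul_mulVec, one_mulVec, Z1_mulVec_e11, Z2_mulVec_e11, XX_mulVec_e11]
  push_cast
  module

theorem qet_ground_state_annihilated_general (k h : ℝ) (hk : 0 < k) :
    star (gs k h) ⬝ᵥ gs k h = 1 ∧
    (Hm k h).mulVec (gs k h) = 0 ∧
    star (gs k h) ⬝ᵥ (Hm k h).mulVec (gs k h) = 0 := by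
  have hH : (Hm k h).mulVec (gs k h) = 0 := by
    have h₀₀ : ((√(h ^ 2 + k ^ 2) + h) * gsAmp00 k h : ℂ) = k * gsAmp11 k h := by
      exact_mod_cast sqrt_add_mul_gsAmp00_eq_mul_gsAmp11 h hk.le
    have h₁₁ : (k * gsAmp00 k h : ℂ) = (√(h ^ 2 + k ^ 2) - h) * gsAmp11 k h := by
      exact_mod_cast mul_gsAmp00_eq_sqrt_sub_mul_gsAmp11 h hk.le
    rw [gs_eq_smul_sub_smul, mulVec_sub, mulVec_smul, mulVec_smul, Hm_mulVec_e00, Hm_mulVec_e11]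
    push_cast
    linear_combination (norm := module) (2 * h₀₀) • e00 + (2 * h₁₁) • e11
  refine ⟨?_, hH, by rw [hH, dotProduct_zero]⟩
  rw [gs_eq_smul_sub_smul, star_smul_e00_sub_smul_e11_dotProduct, gsAmp00_sq_add_gsAmp11_sq,
    Complex.ofReal_one]

/-- `g` is a unit vector and `H · g = 0`; in particular `⟨g|H|g⟩ = 0`. -/
theorem qet_ground_state_annihilated (k h : ℝ) (hk : 0 < k) (hh : 0 < h) :
    star (gs k h) ⬝ᵥ gs k h = 1 ∧
    (Hm k h).mulVec (gs k h) = 0 ∧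
    star (gs k h) ⬝ᵥ (Hm k h).mulVec (gs k h) = 0 :=
  qet_ground_state_annihilated_general k h hk
end
end

section
/- The minimal QET Hamiltonian H = H₁+H₂+V is Hermitian and positive semidefinite; consequently, since H·g = 0, the vector g is a ground state of H with ground-state energy 0. -/
open Matrix Kronecker
open scoped ComplexOrder

noncomputable section

/-!
With `r = √(h² + k²)`, the constant terms add up to `2r`, so `H = 2r + h (Z₁ + Z₂) + 2k X⊗X`.
On `span {|00⟩, |11⟩}` this is `[[2(r+h), 2k], [2k, 2(r-h)]]`, which has determinant
`4(r² - h² - k²) = 0` and hence is the rank-one matrix `|u⟩⟨u| / 2(r+h)` with `u = (2(r+h), 2k)`.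
On `span {|01⟩, |10⟩}` it is `[[2r, 2k], [2k, 2r]] = (r+k) |w₊⟩⟨w₊| + (r-k) |w₋⟩⟨w₋|` with
`w± = |01⟩ ± |10⟩`. All weights are nonnegative, so `H` is positive semidefinite, and a vector
annihilated by `H` minimises its energy `⟨v|H|v⟩`.
-/

def ket (p : Fin 2 × Fin 2) : Fin 2 × Fin 2 → ℂ := Pi.single p 1

def pauliHam (r h k : ℝ) : M4 :=
  ((2 * r : ℝ) : ℂ) • 1 + (h : ℂ) • (Z1 + Z2) + ((2 * k : ℝ) : ℂ) • XX

lemma Hm_eq_pauliHam (k h : ℝ) : Hm k h = pauliHam √(h ^ 2 + k ^ 2) h k := by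
  set r := √(h ^ 2 + k ^ 2) with hr_def
  have hr : r ^ 2 = h ^ 2 + k ^ 2 := Real.sq_sqrt (by positivity)
  -- `r * r / r = r` holds also for `r = 0`, so no case split is needed
  have hconst : h ^ 2 / r + h ^ 2 / r + 2 * k ^ 2 / r = 2 * r := by
    rw [← add_div, ← add_div, show h ^ 2 + h ^ 2 + 2 * k ^ 2 = 2 * (r * r) by linear_combination -2 * hr,
      mul_div_assoc, mul_self_div_self]
  simp only [Hm, H1m, H2m, Vm, pauliHam, ← hr_def, ← hconst]
  push_cast
  module

lemma pauliHam_eq_sum_vecMulVec {r h k : ℝ} (hr : r ^ 2 = h ^ 2 + k ^ 2) (hrh : r + h ≠ 0) :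
    pauliHam r h k =
      (2 * (r + h))⁻¹ • vecMulVec
          (((2 * (r + h) : ℝ) : ℂ) • ket (0, 0) + ((2 * k : ℝ) : ℂ) • ket (1, 1))
          (star (((2 * (r + h) : ℝ) : ℂ) • ket (0, 0) + ((2 * k : ℝ) : ℂ) • ket (1, 1)))
        + (r + k) • vecMulVec (ket (0, 1) + ket (1, 0)) (star (ket (0, 1) + ket (1, 0)))
        + (r - k) • vecMulVec (ket (0, 1) - ket (1, 0)) (star (ket (0, 1) - ket (1, 0))) := by
  have hk : (k : ℂ) ^ 2 = (r - h) * (r + h) := by exact_mod_cast (by linear_combination -hr)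
  have hrh' : (r : ℂ) + h ≠ 0 := by exact_mod_cast hrh
  ext ⟨i, j⟩ ⟨l, m⟩
  fin_cases i <;> fin_cases j <;> fin_cases l <;> fin_cases m <;>
    simp [pauliHam, Z1, Z2, XX, σx, σz, ket, vecMulVec_apply, Prod.ext_iff]
  all_goals field_simp
  all_goals first | ring1 | linear_combination -2 * hk

lemma posSemidef_pauliHam {r h k : ℝ} (hr : r ^ 2 = h ^ 2 + k ^ 2) (hrh : 0 < r + h) :
    (pauliHam r h k).PosSemidef := by
  have hr0 : 0 ≤ r := by nlinarith [sq_nonneg k]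
  obtain ⟨hkr, hrk⟩ : -r ≤ k ∧ k ≤ r := abs_le_of_sq_le_sq' (by nlinarith [sq_nonneg h]) hr0
  rw [pauliHam_eq_sum_vecMulVec hr hrh.ne']
  refine .add (.add ?_ ?_) ?_ <;> refine (posSemidef_vecMulVec_self_star _).smul ?_
  · positivity
  · linarith
  · linarith

theorem qet_hamiltonian_posSemidef_ground_state_general (k h : ℝ) (hh : 0 < h) :
    (Hm k h).IsHermitian ∧ (Hm k h).PosSemidef ∧
    ((Hm k h).mulVec (gs k h) = 0 →
      star (gs k h) ⬝ᵥ (Hm k h).mulVec (gs k h) = 0 ∧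
      ∀ v : (Fin 2 × Fin 2) → ℂ, star v ⬝ᵥ v = 1 →
        (star (gs k h) ⬝ᵥ (Hm k h).mulVec (gs k h)).re ≤ (star v ⬝ᵥ (Hm k h).mulVec v).re) := by
  have hH : (Hm k h).PosSemidef := by
    rw [Hm_eq_pauliHam]
    exact posSemidef_pauliHam (Real.sq_sqrt (by positivity)) (by positivity)
  refine ⟨hH.isHermitian, hH, fun hg => ⟨by rw [hg, dotProduct_zero], fun v _ => ?_⟩⟩
  rw [hg, dotProduct_zero, Complex.zero_re]
  exact (Complex.nonneg_iff.mp (hH.dotProduct_mulVec_nonneg v)).1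

/-- `H` is Hermitian and positive semidefinite; consequently, since `H·g = 0`,
`g` is a ground state of `H` with ground-state energy `0`. -/
theorem qet_hamiltonian_posSemidef_ground_state (k h : ℝ) (hk : 0 < k) (hh : 0 < h) :
    (Hm k h).IsHermitian ∧ (Hm k h).PosSemidef ∧
    ((Hm k h).mulVec (gs k h) = 0 →
      star (gs k h) ⬝ᵥ (Hm k h).mulVec (gs k h) = 0 ∧
      ∀ v : (Fin 2 × Fin 2) → ℂ, star v ⬝ᵥ v = 1 →
        (star (gs k h) ⬝ᵥ (Hm k h).mulVec (gs k h)).re ≤ (star v ⬝ᵥ (Hm k h).mulVec v).re) :=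
  qet_hamiltonian_posSemidef_ground_state_general k h hh
end
end

section
/- The ground state g of the minimal QET Hamiltonian has vanishing expectation value for every local term of the Hamiltonian: ⟨g|H₁|g⟩ = ⟨g|H₂|g⟩ = ⟨g|V|g⟩ = 0, and hence ⟨g|H|g⟩ = 0. -/
open Matrix Kronecker
open scoped ComplexOrder

noncomputable section

/-! The ground state lies in the span of `|00⟩, |11⟩` with real coefficients
`α = √((1 - h/r)/2)` and `β = √((1 + h/r)/2)`. On that span `Z₁` and `Z₂` flip the sign of the
`|11⟩` component and `X ⊗ X` swaps the two components, so `⟨Z₁⟩ = ⟨Z₂⟩ = α² - β² = -h/r` and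
`⟨X ⊗ X⟩ = -2αβ = -k/r`, while `⟨g|g⟩ = α² + β² = 1`. The constant shifts `h²/r` and `2k²/r`
in `H₁`, `H₂`, `V` cancel exactly these values. -/

lemma dotProduct_smul_add_smul_one_mulVec {n R : Type*} [Fintype n] [DecidableEq n]
    [CommSemiring R] (w v : n → R) (A : Matrix n n R) (c d : R) :
    w ⬝ᵥ (c • A + d • 1) *ᵥ v = c * (w ⬝ᵥ A *ᵥ v) + d * (w ⬝ᵥ v) := by
  simp only [add_mulVec, smul_mulVec, one_mulVec, dotProduct_add, dotProduct_smul, smul_eq_mul]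

def evenVec (a b : ℝ) : Fin 2 × Fin 2 → ℂ := fun p => (a : ℂ) * e00 p - (b : ℂ) * e11 p

section evenVec

variable (a b : ℝ)

lemma star_evenVec_dotProduct_evenVec (c d : ℝ) :
    star (evenVec a b) ⬝ᵥ evenVec c d = ((a * c + b * d : ℝ) : ℂ) := by
  simp [evenVec, e00, e11, dotProduct, Fintype.sum_prod_type]

lemma Z1_mulVec_evenVec : Z1 *ᵥ evenVec a b = evenVec a (-b) := by
  ext ⟨i, j⟩
  fin_cases i <;> fin_cases j <;>
    simp [evenVec, e00, e11, Z1, σz, mulVec, dotProduct, Fintype.sum_prod_type]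

lemma Z2_mulVec_evenVec : Z2 *ᵥ evenVec a b = evenVec a (-b) := by
  ext ⟨i, j⟩
  fin_cases i <;> fin_cases j <;>
    simp [evenVec, e00, e11, Z2, σz, mulVec, dotProduct, Fintype.sum_prod_type]

lemma XX_mulVec_evenVec : XX *ᵥ evenVec a b = evenVec (-b) (-a) := by
  ext ⟨i, j⟩
  fin_cases i <;> fin_cases j <;>
    simp [evenVec, e00, e11, XX, σx, mulVec, dotProduct, Fintype.sum_prod_type]

end evenVec

lemma one_div_sqrt_two_mul_sqrt_sq {x : ℝ} (hx : 0 ≤ x) : (1 / √2 * √x) ^ 2 = x / 2 := by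
  rw [mul_pow, div_pow, Real.sq_sqrt zero_le_two, Real.sq_sqrt hx]
  ring

lemma one_div_sqrt_two_mul_sqrt_mul {x : ℝ} (hx : 0 ≤ x) (y : ℝ) :
    (1 / √2 * √x) * (1 / √2 * √y) = √(x * y) / 2 := by
  rw [Real.sqrt_mul hx]
  field_simp
  rw [Real.sq_sqrt zero_le_two]
  ring

lemma gs_eq_evenVec (k h : ℝ) :
    gs k h = evenVec (1 / √2 * √(1 - h / √(h ^ 2 + k ^ 2)))
      (1 / √2 * √(1 + h / √(h ^ 2 + k ^ 2))) :=
  rfl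

lemma star_gs_dotProduct_gs (k h : ℝ) : star (gs k h) ⬝ᵥ gs k h = 1 := by
  obtain ⟨hle, hge⟩ := abs_le.mp (abs_div_sqrt_sq_add_sq_le_one h k)
  rw [gs_eq_evenVec, star_evenVec_dotProduct_evenVec, ← sq, ← sq,
    one_div_sqrt_two_mul_sqrt_sq (by linarith), one_div_sqrt_two_mul_sqrt_sq (by linarith)]
  push_cast
  ring

lemma star_gs_dotProduct_Z1_mulVec (k h : ℝ) :
    star (gs k h) ⬝ᵥ Z1 *ᵥ gs k h = ((-(h / √(h ^ 2 + k ^ 2)) : ℝ) : ℂ) := by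
  obtain ⟨hle, hge⟩ := abs_le.mp (abs_div_sqrt_sq_add_sq_le_one h k)
  rw [gs_eq_evenVec, Z1_mulVec_evenVec, star_evenVec_dotProduct_evenVec, ← sq, mul_neg, ← sq,
    one_div_sqrt_two_mul_sqrt_sq (by linarith), one_div_sqrt_two_mul_sqrt_sq (by linarith)]
  push_cast
  ring

lemma star_gs_dotProduct_Z2_mulVec (k h : ℝ) :
    star (gs k h) ⬝ᵥ Z2 *ᵥ gs k h = ((-(h / √(h ^ 2 + k ^ 2)) : ℝ) : ℂ) := by
  rw [gs_eq_evenVec, Z2_mulVec_evenVec, ← Z1_mulVec_evenVec, ← gs_eq_evenVec,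
    star_gs_dotProduct_Z1_mulVec]

lemma one_sub_div_mul_one_add_div {h k r : ℝ} (hr : r ^ 2 = h ^ 2 + k ^ 2) (hr0 : r ≠ 0) :
    (1 - h / r) * (1 + h / r) = (k / r) ^ 2 := by
  field_simp
  linear_combination hr

lemma star_gs_dotProduct_XX_mulVec {k : ℝ} (hk : 0 < k) (h : ℝ) :
    star (gs k h) ⬝ᵥ XX *ᵥ gs k h = ((-(k / √(h ^ 2 + k ^ 2)) : ℝ) : ℂ) := by
  have hr : √(h ^ 2 + k ^ 2) ^ 2 = h ^ 2 + k ^ 2 := Real.sq_sqrt (by positivity)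
  have hr0 : √(h ^ 2 + k ^ 2) ≠ 0 := by positivity
  have hle := (abs_le.mp (abs_div_sqrt_sq_add_sq_le_one h k)).2
  rw [gs_eq_evenVec, XX_mulVec_evenVec, star_evenVec_dotProduct_evenVec]
  congr 1
  calc _ = -(2 * ((1 / √2 * √(1 - h / √(h ^ 2 + k ^ 2))) *
          (1 / √2 * √(1 + h / √(h ^ 2 + k ^ 2))))) := by ring
    _ = -(k / √(h ^ 2 + k ^ 2)) := by
      rw [one_div_sqrt_two_mul_sqrt_mul (by linarith), one_sub_div_mul_one_add_div hr hr0,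
        Real.sqrt_sq (by positivity)]
      ring

theorem qet_local_terms_vanish_general (k h : ℝ) (hk : 0 < k) :
    star (gs k h) ⬝ᵥ (H1m k h).mulVec (gs k h) = 0 ∧
    star (gs k h) ⬝ᵥ (H2m k h).mulVec (gs k h) = 0 ∧
    star (gs k h) ⬝ᵥ (Vm k h).mulVec (gs k h) = 0 ∧
    star (gs k h) ⬝ᵥ (Hm k h).mulVec (gs k h) = 0 := by
  have h1 : star (gs k h) ⬝ᵥ (H1m k h).mulVec (gs k h) = 0 := by
    rw [H1m, dotProduct_smul_add_smul_one_mulVec, star_gs_dotProduct_Z1_mulVec,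
      star_gs_dotProduct_gs]
    push_cast
    ring
  have h2 : star (gs k h) ⬝ᵥ (H2m k h).mulVec (gs k h) = 0 := by
    rw [H2m, dotProduct_smul_add_smul_one_mulVec, star_gs_dotProduct_Z2_mulVec,
      star_gs_dotProduct_gs]
    push_cast
    ring
  have hV : star (gs k h) ⬝ᵥ (Vm k h).mulVec (gs k h) = 0 := by
    rw [Vm, dotProduct_smul_add_smul_one_mulVec, star_gs_dotProduct_XX_mulVec hk,
      star_gs_dotProduct_gs]
    push_cast
    ring
  refine ⟨h1, h2, hV, ?_⟩
  rw [Hm, add_mulVec, add_mulVec, dotProduct_add, dotProduct_add, h1, h2, hV, add_zero, add_zero]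

/-- the ground state has vanishing expectation value for every local term. -/
theorem qet_local_terms_vanish (k h : ℝ) (hk : 0 < k) (hh : 0 < h) :
    star (gs k h) ⬝ᵥ (H1m k h).mulVec (gs k h) = 0 ∧
    star (gs k h) ⬝ᵥ (H2m k h).mulVec (gs k h) = 0 ∧
    star (gs k h) ⬝ᵥ (Vm k h).mulVec (gs k h) = 0 ∧
    star (gs k h) ⬝ᵥ (Hm k h).mulVec (gs k h) = 0 :=
  qet_local_terms_vanish_general k h hk
end
end

section
/- For all h, k > 0 the ground state g of the minimal QET Hamiltonian is entangled: there exist no vectors u, v ∈ ℂ² such that g = u ⊗ v. -/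
open Matrix Kronecker
open scoped ComplexOrder

noncomputable section

/-! Reshaping a vector of `ℂ² ⊗ ℂ²` into its `2 × 2` coefficient matrix sends a product vector
`u ⊗ v` to the rank-one matrix `vecMulVec u v`, whose determinant is `0`. The coefficient matrix
of the ground state is diagonal with entries `±√((1 ∓ h / r) / 2)`,
and both are nonzero because `|h| < r` as soon as `k ≠ 0`. -/

theorem Matrix.det_of_curry_eq_zero_of_eq_mul {n R : Type*} [Fintype n] [DecidableEq n]
    [Nontrivial n] [CommRing R] {w : n × n → R} {u v : n → R}
    (hw : w = fun p => u p.1 * v p.2) : (Matrix.of (Function.curry w)).det = 0 := by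
  subst hw
  exact det_vecMulVec u v

theorem abs_div_sqrt_sq_add_sq_lt_one {k : ℝ} (h : ℝ) (hk : k ≠ 0) :
    |h / √(h ^ 2 + k ^ 2)| < 1 := by
  have hk2 : 0 < k ^ 2 := by positivity
  have hr : |h| < √(h ^ 2 + k ^ 2) :=
    (Real.lt_sqrt (abs_nonneg h)).2 (by rw [sq_abs]; linarith)
  rw [abs_div, abs_of_nonneg (Real.sqrt_nonneg _), div_lt_one (hr.trans_le' (abs_nonneg h))]
  exact hr

theorem gs_apply_zero_zero (k h : ℝ) :
    gs k h (0, 0) = ((1 / √2 * √(1 - h / √(h ^ 2 + k ^ 2)) : ℝ) : ℂ) := by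
  simp [gs, e00, e11]

theorem gs_apply_zero_one (k h : ℝ) : gs k h (0, 1) = 0 := by
  simp [gs, e00, e11]

theorem gs_apply_one_one (k h : ℝ) :
    gs k h (1, 1) = -((1 / √2 * √(1 + h / √(h ^ 2 + k ^ 2)) : ℝ) : ℂ) := by
  simp [gs, e00, e11]

theorem gs_apply_zero_zero_ne_zero {k : ℝ} (h : ℝ) (hk : k ≠ 0) : gs k h (0, 0) ≠ 0 := by
  have hx := (abs_lt.1 (abs_div_sqrt_sq_add_sq_lt_one h hk)).2
  rw [gs_apply_zero_zero, Complex.ofReal_ne_zero]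
  exact mul_ne_zero (by positivity) (Real.sqrt_ne_zero'.2 (by linarith))

theorem gs_apply_one_one_ne_zero {k : ℝ} (h : ℝ) (hk : k ≠ 0) : gs k h (1, 1) ≠ 0 := by
  have hx := (abs_lt.1 (abs_div_sqrt_sq_add_sq_lt_one h hk)).1
  rw [gs_apply_one_one, neg_ne_zero, Complex.ofReal_ne_zero]
  exact mul_ne_zero (by positivity) (Real.sqrt_ne_zero'.2 (by linarith))

theorem det_of_curry_gs_ne_zero {k : ℝ} (h : ℝ) (hk : k ≠ 0) :
    (Matrix.of (Function.curry (gs k h))).det ≠ 0 := by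
  rw [det_fin_two]
  simp only [of_apply, Function.curry_apply, gs_apply_zero_one, zero_mul, sub_zero]
  exact mul_ne_zero (gs_apply_zero_zero_ne_zero h hk) (gs_apply_one_one_ne_zero h hk)

theorem qet_ground_state_entangled_general (k h : ℝ) (hk : 0 < k) :
    ¬ ∃ (u v : Fin 2 → ℂ), gs k h = fun p => u p.1 * v p.2 := by
  rintro ⟨u, v, hg⟩
  exact det_of_curry_gs_ne_zero h hk.ne' (Matrix.det_of_curry_eq_zero_of_eq_mul hg)

/-- the ground state is entangled: it is not a Kronecker (tensor) product
of two vectors in ℂ². -/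
theorem qet_ground_state_entangled (k h : ℝ) (hk : 0 < k) (hh : 0 < h) :
    ¬ ∃ (u v : Fin 2 → ℂ), gs k h = fun p => u p.1 * v p.2 :=
  qet_ground_state_entangled_general k h hk
end
end

section
/- (Completeness of the QET verification.) If θ ∈ ℝ is the QET-optimal angle, i.e. cos 2θ = (h²+2k²)/√((h²+2k²)² + (hk)²) and sin 2θ = hk/√((h²+2k²)² + (hk)²), then Bob's expected local energy equals Tr[ρ_QET(θ)·(H₂ + V)] = ((h²+2k²) − √((h²+2k²)² + (hk)²))/√(h²+k²), and this quantity is strictly negative for all h, k > 0. -/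
open Matrix Kronecker
open scoped ComplexOrder

noncomputable section

/-! In the ground state `g = a|00⟩ - b|11⟩` the amplitudes satisfy `a² - b² = -h/r` and
`2ab = k/r`. Branch `μ` of the protocol leaves Bob with the product state
`½ (|0⟩ + μ|1⟩) ⊗ (u|0⟩ + μ v|1⟩)`, where `u = a cos θ + b sin θ` and `v = a sin θ - b cos θ`,
so the energy `h(u² - v²) + 4k uv + (h² + 2k²)/r` is read off as
`((h² + 2k²)(1 - cos 2θ) - hk sin 2θ)/r`. At the optimal angle this equals `(A - R)/r` with
`A = h² + 2k²` and `R = √(A² + (hk)²)`, and `R > A` because `hk ≠ 0`. -/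

theorem Matrix.trace_mul_vecMulVec_star_mul_conjTranspose_mul {n R : Type*} [Fintype n]
    [CommSemiring R] [StarRing R] (A O : Matrix n n R) (g : n → R) :
    (A * vecMulVec g (star g) * Aᴴ * O).trace = star (A *ᵥ g) ⬝ᵥ (O *ᵥ (A *ᵥ g)) := by
  rw [mul_vecMulVec, vecMulVec_mul, ← star_mulVec, vecMulVec_mul, trace_vecMulVec,
    dotProduct_comm, ← dotProduct_mulVec]

theorem σx_conjTranspose : σxᴴ = σx := by
  ext i j; fin_cases i <;> fin_cases j <;> simp [σx]

theorem PA_conjTranspose (μ : ℝ) : (PA μ)ᴴ = PA μ := by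
  simp [PA, X1, conjTranspose_kronecker, σx_conjTranspose]

theorem trace_ρQET_mul (k h θ : ℝ) (O : M4) :
    (ρQET k h θ * O).trace =
      star ((UB (-1) θ * PA (-1)) *ᵥ gs k h) ⬝ᵥ (O *ᵥ ((UB (-1) θ * PA (-1)) *ᵥ gs k h)) +
      star ((UB 1 θ * PA 1) *ᵥ gs k h) ⬝ᵥ (O *ᵥ ((UB 1 θ * PA 1) *ᵥ gs k h)) := by
  simp only [ρQET, gProj, add_mul, trace_add,
    ← trace_mul_vecMulVec_star_mul_conjTranspose_mul, conjTranspose_mul, PA_conjTranspose,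
    Matrix.mul_assoc]

theorem gs_amplitudes {k : ℝ} (hk : 0 < k) (h : ℝ) :
    ∃ a b : ℝ, gs k h = (fun p => (a : ℂ) * e00 p - (b : ℂ) * e11 p) ∧
      a ^ 2 + b ^ 2 = 1 ∧ a ^ 2 - b ^ 2 = -(h / √(h ^ 2 + k ^ 2)) ∧
      2 * (a * b) = k / √(h ^ 2 + k ^ 2) := by
  set r := √(h ^ 2 + k ^ 2)
  have hr : 0 < r := Real.sqrt_pos.mpr (by positivity)
  have hr2 : r ^ 2 = h ^ 2 + k ^ 2 := Real.sq_sqrt (by positivity)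
  have hhr : |h / r| ≤ 1 := by
    rw [abs_div, abs_of_pos hr, div_le_one hr]
    exact Real.abs_le_sqrt (by nlinarith)
  obtain ⟨hlo, hhi⟩ := abs_le.mp hhr
  have hprod : (1 - h / r) * (1 + h / r) = (k / r) ^ 2 := by
    field_simp
    linear_combination hr2
  have hsq : ∀ x : ℝ, 0 ≤ x → (1 / √2 * √x) ^ 2 = x / 2 := fun x hx => by
    rw [mul_pow, div_pow, one_pow, Real.sq_sqrt zero_le_two, Real.sq_sqrt hx]; ring
  refine ⟨1 / √2 * √(1 - h / r), 1 / √2 * √(1 + h / r), rfl, ?_, ?_, ?_⟩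
  · rw [hsq _ (by linarith), hsq _ (by linarith)]; ring
  · rw [hsq _ (by linarith), hsq _ (by linarith)]; ring
  · calc 2 * (1 / √2 * √(1 - h / r) * (1 / √2 * √(1 + h / r)))
        _ = 2 * (1 / √2) ^ 2 * √((1 - h / r) * (1 + h / r)) := by
          rw [Real.sqrt_mul (by linarith)]; ring
        _ = k / r := by
          rw [hprod, Real.sqrt_sq (by positivity), div_pow, Real.sq_sqrt zero_le_two]; ring

def branchState (μ u v : ℝ) : Fin 2 × Fin 2 → ℂ :=
  fun p => ((![1, μ] p.1 * ![u, μ * v] p.2 / 2 : ℝ) : ℂ)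

theorem UB_mul_PA_mulVec {μ : ℝ} (hμ : μ = -1 ∨ μ = 1) (θ a b : ℝ) :
    (UB μ θ * PA μ) *ᵥ (fun p => (a : ℂ) * e00 p - (b : ℂ) * e11 p) =
      branchState μ (Real.cos θ * a + Real.sin θ * b) (Real.sin θ * a - Real.cos θ * b) := by
  rw [← mulVec_mulVec]
  ext ⟨i, j⟩
  rcases hμ with rfl | rfl <;> fin_cases i <;> fin_cases j <;>
    simp [branchState, UB, PA, Y2, X1, σx, σy, e00, e11, mulVec, dotProduct,
      Fintype.sum_prod_type, Matrix.one_apply] <;>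
    ring_nf <;> simp only [Complex.I_sq] <;> ring

theorem star_branchState_dotProduct_mulVec {μ : ℝ} (hμ : μ = -1 ∨ μ = 1) (α β γ u v : ℝ) :
    star (branchState μ u v) ⬝ᵥ
        (((α : ℂ) • Z2 + (β : ℂ) • XX + (γ : ℂ) • (1 : M4)) *ᵥ branchState μ u v) =
      ((α * (u ^ 2 - v ^ 2) + 2 * β * (u * v) + γ * (u ^ 2 + v ^ 2)) / 2 : ℝ) := by
  rcases hμ with rfl | rfl <;>
    simp [branchState, Z2, XX, σx, σz, mulVec, dotProduct, Fintype.sum_prod_type,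
      Matrix.one_apply] <;> ring

theorem H2m_add_Vm (k h : ℝ) :
    H2m k h + Vm k h = (h : ℂ) • Z2 + ((2 * k : ℝ) : ℂ) • XX +
      (((h ^ 2 + 2 * k ^ 2) / √(h ^ 2 + k ^ 2) : ℝ) : ℂ) • (1 : M4) := by
  simp only [H2m, Vm, add_div, mul_div_assoc, Complex.ofReal_add, add_smul]
  abel

theorem trace_ρQET_mul_H2m_add_Vm {k : ℝ} (hk : 0 < k) (h θ : ℝ) :
    (ρQET k h θ * (H2m k h + Vm k h)).trace =
      ((((h ^ 2 + 2 * k ^ 2) * (1 - Real.cos (2 * θ)) - h * k * Real.sin (2 * θ)) /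
        √(h ^ 2 + k ^ 2) : ℝ) : ℂ) := by
  obtain ⟨a, b, hg, hsum, hdiff, hprod⟩ := gs_amplitudes hk h
  rw [trace_ρQET_mul, hg, UB_mul_PA_mulVec (Or.inl rfl), UB_mul_PA_mulVec (Or.inr rfl),
    H2m_add_Vm, star_branchState_dotProduct_mulVec (Or.inl rfl),
    star_branchState_dotProduct_mulVec (Or.inr rfl), ← Complex.ofReal_add]
  congr 1
  rw [Real.cos_two_mul, Real.sin_two_mul]
  set c := Real.cos θ
  set s := Real.sin θ
  set r := √(h ^ 2 + k ^ 2)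
  have hcs : c ^ 2 + s ^ 2 = 1 := Real.cos_sq_add_sin_sq θ
  linear_combination (h * (c ^ 2 - s ^ 2) + 4 * k * c * s) * hdiff
    + (2 * h * c * s - 2 * k * (c ^ 2 - s ^ 2)) * hprod
    + (h ^ 2 + 2 * k ^ 2) / r * (c ^ 2 + s ^ 2) * hsum
    + 2 * (h ^ 2 + 2 * k ^ 2) / r * hcs

/-- Completeness: at the QET-optimal angle, Bob's expected local energy
equals `((h²+2k²) − √((h²+2k²)² + (hk)²))/√(h²+k²)`, which is strictly negative. -/
theorem qet_completeness (k h : ℝ) (hk : 0 < k) (hh : 0 < h) (θ : ℝ)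
    (hcos : Real.cos (2 * θ) =
      (h ^ 2 + 2 * k ^ 2) / Real.sqrt ((h ^ 2 + 2 * k ^ 2) ^ 2 + (h * k) ^ 2))
    (hsin : Real.sin (2 * θ) =
      h * k / Real.sqrt ((h ^ 2 + 2 * k ^ 2) ^ 2 + (h * k) ^ 2)) :
    (ρQET k h θ * (H2m k h + Vm k h)).trace =
      ((((h ^ 2 + 2 * k ^ 2) - Real.sqrt ((h ^ 2 + 2 * k ^ 2) ^ 2 + (h * k) ^ 2)) /
          Real.sqrt (h ^ 2 + k ^ 2) : ℝ) : ℂ) ∧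
    ((h ^ 2 + 2 * k ^ 2) - Real.sqrt ((h ^ 2 + 2 * k ^ 2) ^ 2 + (h * k) ^ 2)) /
        Real.sqrt (h ^ 2 + k ^ 2) < 0 := by
  set A := h ^ 2 + 2 * k ^ 2
  set R := √(A ^ 2 + (h * k) ^ 2)
  have hR : 0 < R := Real.sqrt_pos.mpr (by positivity)
  have hR2 : R ^ 2 = A ^ 2 + (h * k) ^ 2 := Real.sq_sqrt (by positivity)
  have hAR : A < R := (Real.lt_sqrt (by positivity)).mpr (by nlinarith [mul_pos hh hk])
  refine ⟨?_, div_neg_of_neg_of_pos (sub_neg.mpr hAR) (Real.sqrt_pos.mpr (by positivity))⟩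
  rw [trace_ρQET_mul_H2m_add_Vm hk, hcos, hsin]
  congr 2
  field_simp
  linear_combination hR2
end
end

section
/- (Zero-knowledge of the X₁X₂ measurement.) Fix θ ∈ ℝ. For every real number v, the set {(k,h) ∈ ℝ² : k > 0, h > 0, and Tr[ρ_QET(k,h,θ)·(X⊗X)] = v} is uncountable whenever it is nonempty. -/
open Matrix Kronecker
open scoped ComplexOrder

noncomputable section

/-! The post-protocol state depends on `(k, h)` only through `h / √(h² + k²)`, so it is
constant along every open ray of the quadrant; each nonempty level set of the `X⊗X`
expectation therefore contains a whole ray and is uncountable. -/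

lemma div_sqrt_sq_add_sq_mul_left {t : ℝ} (ht : 0 < t) (k h : ℝ) :
    t * h / √((t * h) ^ 2 + (t * k) ^ 2) = h / √(h ^ 2 + k ^ 2) := by
  rw [show (t * h) ^ 2 + (t * k) ^ 2 = t ^ 2 * (h ^ 2 + k ^ 2) by ring,
    Real.sqrt_mul (sq_nonneg t), Real.sqrt_sq ht.le, mul_div_mul_left _ _ ht.ne']

lemma gs_mul_left {t : ℝ} (ht : 0 < t) (k h : ℝ) : gs (t * k) (t * h) = gs k h := by
  funext p
  simp only [gs, div_sqrt_sq_add_sq_mul_left ht]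

lemma ρQET_smul {t : ℝ} (ht : 0 < t) (p : ℝ × ℝ) (θ : ℝ) :
    ρQET (t • p).1 (t • p).2 θ = ρQET p.1 p.2 θ := by
  simp only [ρQET, gProj, Prod.smul_fst, Prod.smul_snd, smul_eq_mul, gs_mul_left ht]

lemma Real.not_countable_Ioi (a : ℝ) : ¬ (Set.Ioi a).Countable := fun h =>
  (Cardinal.mk_Ioi_real a ▸ h.le_aleph0).not_gt Cardinal.aleph0_lt_continuum

lemma Set.not_countable_of_pos_smul_mem {E : Type*} [AddCommGroup E] [Module ℝ E]
    {S : Set E} (hS : ∀ t : ℝ, 0 < t → ∀ x ∈ S, t • x ∈ S) {x : E} (hx : x ∈ S)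
    (hx0 : x ≠ 0) : ¬ S.Countable := fun hC =>
  Real.not_countable_Ioi 0 <|
    Set.MapsTo.countable_of_injOn (fun t ht => hS t ht x hx)
      ((smul_left_injective ℝ hx0).injOn) hC

/-- Zero-knowledge of the X₁X₂ measurement: each attained value of
`Tr[ρ_QET(k,h,θ)·(X⊗X)]` has an uncountable preimage in the open positive quadrant
(points are `p = (k, h)`). -/
theorem qet_XX_zero_knowledge (θ : ℝ) (v : ℝ)
    (hne : {p : ℝ × ℝ | 0 < p.1 ∧ 0 < p.2 ∧
      (ρQET p.1 p.2 θ * XX).trace = (v : ℂ)}.Nonempty) :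
    ¬ {p : ℝ × ℝ | 0 < p.1 ∧ 0 < p.2 ∧
      (ρQET p.1 p.2 θ * XX).trace = (v : ℂ)}.Countable := by
  set S := {p : ℝ × ℝ | 0 < p.1 ∧ 0 < p.2 ∧ (ρQET p.1 p.2 θ * XX).trace = (v : ℂ)}
  obtain ⟨p, hp⟩ := hne
  have hcone : ∀ t : ℝ, 0 < t → ∀ q ∈ S, t • q ∈ S := by
    rintro t ht q ⟨hq₁, hq₂, hq⟩
    exact ⟨mul_pos ht hq₁, mul_pos ht hq₂, by rw [ρQET_smul ht, hq]⟩
  exact Set.not_countable_of_pos_smul_mem hcone hp fun hp0 => hp.1.ne' (by simp [hp0])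
end
end

section
/- (Quantum state distinguishability via the interaction term.) Let θ ∈ ℝ be the QET-optimal angle, i.e. cos 2θ = (h²+2k²)/√((h²+2k²)² + (hk)²) and sin 2θ = hk/√((h²+2k²)² + (hk)²). Then for every μ ∈ {−1,+1}: Tr[ρ(μ,μ,θ)·V] < 0 (faithful case) and Tr[ρ(μ,−μ,θ)·V] > 0 (non-faithful case). -/
open Matrix Kronecker
open scoped ComplexOrder

noncomputable section

/-! Bob's rotation acts on the second qubit only, so it turns the coupling `X ⊗ X` of `V` into
`X ⊗ (cos 2θ X + ν sin 2θ Z)`, while Alice's projector `pa μ` on the first qubit satisfies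
`pa μ X pa μ = μ pa μ`. Evaluating on the ground state, whose amplitudes `a, b` satisfy
`2ab = k / r` and `a² - b² = -h / r`, gives
`Tr[ρ(μ,ν,θ) V] = (2k / r) (k (1 - cos 2θ) - μ ν h sin 2θ)`.
With `s = √((h² + 2k²)² + (hk)²)`, at the optimal angle the bracket is
`k (s - h² - 2k² - μ ν h²) / s`: negative for `μ ν = 1` because `s² < (2h² + 2k²)²`, positive for
`μ ν = -1` because `s ≥ h² + 2k²`. -/

def pa (μ : ℝ) : M2 := (2 : ℂ)⁻¹ • ((1 : M2) + (μ : ℂ) • σx)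

def ub (ν θ : ℝ) : M2 :=
  ((Real.cos θ : ℝ) : ℂ) • (1 : M2) - ((Complex.I * ν * Real.sin θ) : ℂ) • σy

lemma PA_eq_kronecker (μ : ℝ) : PA μ = pa μ ⊗ₖ (1 : M2) := by
  simp only [PA, pa, X1, add_kronecker, smul_kronecker, one_kronecker_one]

lemma UB_eq_kronecker (ν θ : ℝ) : UB ν θ = (1 : M2) ⊗ₖ ub ν θ := by
  simp only [UB, ub, Y2, sub_eq_add_neg, ← neg_smul, kronecker_add, kronecker_smul,
    one_kronecker_one]

lemma pa_mul_σx_mul_pa {μ : ℝ} (hμ : μ ^ 2 = 1) : pa μ * σx * pa μ = (μ : ℂ) • pa μ := by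
  have hμ' : (μ : ℂ) ^ 2 = 1 := by exact_mod_cast hμ
  ext i j; fin_cases i <;> fin_cases j <;>
    simp [pa, σx, mul_apply, Fin.sum_univ_two] <;> grind

lemma pa_mul_pa {μ : ℝ} (hμ : μ ^ 2 = 1) : pa μ * pa μ = pa μ := by
  have hμ' : (μ : ℂ) ^ 2 = 1 := by exact_mod_cast hμ
  ext i j; fin_cases i <;> fin_cases j <;>
    simp [pa, σx, mul_apply, Fin.sum_univ_two] <;> grind

lemma ub_conjTranspose_mul_σx_mul_ub {ν : ℝ} (hν : ν ^ 2 = 1) (θ : ℝ) :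
    (ub ν θ)ᴴ * σx * ub ν θ =
      ((Real.cos (2 * θ) : ℝ) : ℂ) • σx + ((ν * Real.sin (2 * θ) : ℝ) : ℂ) • σz := by
  have hν' : (ν : ℂ) ^ 2 = 1 := by exact_mod_cast hν
  rw [Real.cos_two_mul', Real.sin_two_mul]
  ext i j; fin_cases i <;> fin_cases j <;>
    simp [-Complex.ofReal_cos, -Complex.ofReal_sin, ub, σx, σy, σz, mul_apply, Fin.sum_univ_two] <;>
    grind [Complex.I_sq]

lemma ub_conjTranspose_mul_ub {ν : ℝ} (hν : ν ^ 2 = 1) (θ : ℝ) : (ub ν θ)ᴴ * ub ν θ = 1 := by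
  have hν' : (ν : ℂ) ^ 2 = 1 := by exact_mod_cast hν
  have hcs : ((Real.cos θ : ℝ) : ℂ) ^ 2 + ((Real.sin θ : ℝ) : ℂ) ^ 2 = 1 := by
    exact_mod_cast Real.cos_sq_add_sin_sq θ
  ext i j; fin_cases i <;> fin_cases j <;>
    simp [-Complex.ofReal_cos, -Complex.ofReal_sin, ub, σy, mul_apply, Fin.sum_univ_two] <;>
    grind [Complex.I_sq]

lemma PA_mul_UB_conj_Vm_mul_PA {μ ν : ℝ} (hμ : μ ^ 2 = 1) (hν : ν ^ 2 = 1) (k h θ : ℝ) :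
    PA μ * (UB ν θ)ᴴ * Vm k h * UB ν θ * PA μ =
      ((2 * k * μ : ℝ) : ℂ) • (pa μ ⊗ₖ
          (((Real.cos (2 * θ) : ℝ) : ℂ) • σx + ((ν * Real.sin (2 * θ) : ℝ) : ℂ) • σz))
        + ((2 * k ^ 2 / √(h ^ 2 + k ^ 2) : ℝ) : ℂ) • (pa μ ⊗ₖ (1 : M2)) := by
  rw [PA_eq_kronecker, UB_eq_kronecker, conjTranspose_kronecker, conjTranspose_one, Vm, XX,
    ← one_kronecker_one]
  simp only [add_mul, mul_add, smul_mul_assoc, mul_smul_comm, ← mul_kronecker_mul, one_mul,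
    mul_one, pa_mul_σx_mul_pa hμ, pa_mul_pa hμ, ub_conjTranspose_mul_σx_mul_ub hν,
    ub_conjTranspose_mul_ub hν, smul_kronecker, smul_smul]
  simp only [Complex.ofReal_mul]

lemma trace_ρMN_mul (k h μ ν θ : ℝ) (M : M4) :
    (ρMN k h μ ν θ * M).trace =
      2 * (gProj k h * (PA μ * (UB ν θ)ᴴ * M * UB ν θ * PA μ)).trace := by
  rw [ρMN, smul_mul_assoc, trace_smul, smul_eq_mul]
  congr 1
  calc (UB ν θ * PA μ * gProj k h * PA μ * (UB ν θ)ᴴ * M).trace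
      = ((UB ν θ * PA μ) * (gProj k h * PA μ * (UB ν θ)ᴴ * M)).trace := by
        simp only [Matrix.mul_assoc]
    _ = ((gProj k h * PA μ * (UB ν θ)ᴴ * M) * (UB ν θ * PA μ)).trace := trace_mul_comm _ _
    _ = _ := by simp only [Matrix.mul_assoc]

lemma trace_vecMulVec_mul_kronecker (a b : ℝ) (A B : M2) :
    (vecMulVec (fun p => (a : ℂ) * e00 p - (b : ℂ) * e11 p)
        (star fun p => (a : ℂ) * e00 p - (b : ℂ) * e11 p) * (A ⊗ₖ B)).trace =
      (a : ℂ) ^ 2 * (A 0 0 * B 0 0) - a * b * (A 0 1 * B 0 1 + A 1 0 * B 1 0)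
        + (b : ℂ) ^ 2 * (A 1 1 * B 1 1) := by
  simp [trace, mul_apply, vecMulVec_apply, Fintype.sum_prod_type, Fin.sum_univ_two, e00, e11]
  ring

def gsAmp₀ (k h : ℝ) : ℝ := 1 / √2 * √(1 - h / √(h ^ 2 + k ^ 2))

def gsAmp₁ (k h : ℝ) : ℝ := 1 / √2 * √(1 + h / √(h ^ 2 + k ^ 2))

lemma trace_gProj_mul_kronecker (k h : ℝ) (A B : M2) :
    (gProj k h * (A ⊗ₖ B)).trace =
      (gsAmp₀ k h : ℂ) ^ 2 * (A 0 0 * B 0 0)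
        - gsAmp₀ k h * gsAmp₁ k h * (A 0 1 * B 0 1 + A 1 0 * B 1 0)
        + (gsAmp₁ k h : ℂ) ^ 2 * (A 1 1 * B 1 1) :=
  trace_vecMulVec_mul_kronecker _ _ A B

lemma gsAmp₀_sq (k h : ℝ) : gsAmp₀ k h ^ 2 = (1 - h / √(h ^ 2 + k ^ 2)) / 2 := by
  have := abs_le.1 (abs_div_sqrt_sq_add_sq_le_one h k)
  rw [gsAmp₀, mul_pow, div_pow, Real.sq_sqrt zero_le_two, Real.sq_sqrt (by linarith)]
  ring

lemma gsAmp₁_sq (k h : ℝ) : gsAmp₁ k h ^ 2 = (1 + h / √(h ^ 2 + k ^ 2)) / 2 := by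
  have := abs_le.1 (abs_div_sqrt_sq_add_sq_le_one h k)
  rw [gsAmp₁, mul_pow, div_pow, Real.sq_sqrt zero_le_two, Real.sq_sqrt (by linarith)]
  ring

lemma gsAmp₀_mul_gsAmp₁ (h : ℝ) {k : ℝ} (hk : 0 < k) :
    gsAmp₀ k h * gsAmp₁ k h = k / (2 * √(h ^ 2 + k ^ 2)) := by
  have hr : 0 < √(h ^ 2 + k ^ 2) := Real.sqrt_pos.2 (by positivity)
  have hr2 : √(h ^ 2 + k ^ 2) ^ 2 = h ^ 2 + k ^ 2 := Real.sq_sqrt (by positivity)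
  have hsq : (gsAmp₀ k h * gsAmp₁ k h) ^ 2 = (k / (2 * √(h ^ 2 + k ^ 2))) ^ 2 := by
    rw [mul_pow, gsAmp₀_sq, gsAmp₁_sq]
    field_simp
    linear_combination hr2
  have hpos : 0 ≤ gsAmp₀ k h * gsAmp₁ k h := by unfold gsAmp₀ gsAmp₁; positivity
  exact (pow_left_inj₀ hpos (by positivity) two_ne_zero).1 hsq

lemma trace_ρMN_mul_Vm {k : ℝ} (hk : 0 < k) (h θ : ℝ) {μ ν : ℝ} (hμ : μ ^ 2 = 1)
    (hν : ν ^ 2 = 1) :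
    (ρMN k h μ ν θ * Vm k h).trace =
      ((2 * k / √(h ^ 2 + k ^ 2) * (k * (1 - Real.cos (2 * θ)) - μ * ν * h * Real.sin (2 * θ)) :
        ℝ) : ℂ) := by
  have hμ' : (μ : ℂ) ^ 2 = 1 := by exact_mod_cast hμ
  have hdiff : (gsAmp₀ k h : ℂ) ^ 2 - (gsAmp₁ k h : ℂ) ^ 2 = -(h / √(h ^ 2 + k ^ 2) : ℝ) := by
    exact_mod_cast (by rw [gsAmp₀_sq, gsAmp₁_sq]; ring)
  have hsum : (gsAmp₀ k h : ℂ) ^ 2 + (gsAmp₁ k h : ℂ) ^ 2 = 1 := by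
    exact_mod_cast (by rw [gsAmp₀_sq, gsAmp₁_sq]; ring)
  have hprod : (gsAmp₀ k h : ℂ) * gsAmp₁ k h = (k / (2 * √(h ^ 2 + k ^ 2)) : ℝ) := by
    exact_mod_cast gsAmp₀_mul_gsAmp₁ h hk
  rw [trace_ρMN_mul, PA_mul_UB_conj_Vm_mul_PA hμ hν, mul_add, mul_smul_comm, mul_smul_comm,
    trace_add, trace_smul, trace_smul, trace_gProj_mul_kronecker, trace_gProj_mul_kronecker]
  simp only [pa, σx, σz, Matrix.smul_apply, Matrix.add_apply, one_apply_eq, one_apply_ne,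
    of_apply, cons_val', cons_val_zero, cons_val_one, cons_val_fin_one, smul_eq_mul, ne_eq,
    zero_ne_one, one_ne_zero, not_false_eq_true]
  push_cast at hdiff hprod ⊢
  set r : ℂ := ((√(h ^ 2 + k ^ 2) : ℝ) : ℂ)
  linear_combination (2 * k * μ * ν * Complex.sin (2 * θ)) * hdiff
    - (4 * k * μ ^ 2 * Complex.cos (2 * θ)) * hprod
    - (2 * k ^ 2 / r * Complex.cos (2 * θ)) * hμ' + (2 * k ^ 2 / r) * hsum

lemma optimal_angle_faithful_neg {k h θ : ℝ} (hk : 0 < k) (hh : 0 < h)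
    (hcos : Real.cos (2 * θ) =
      (h ^ 2 + 2 * k ^ 2) / √((h ^ 2 + 2 * k ^ 2) ^ 2 + (h * k) ^ 2))
    (hsin : Real.sin (2 * θ) = h * k / √((h ^ 2 + 2 * k ^ 2) ^ 2 + (h * k) ^ 2)) :
    k * (1 - Real.cos (2 * θ)) - h * Real.sin (2 * θ) < 0 := by
  set s := √((h ^ 2 + 2 * k ^ 2) ^ 2 + (h * k) ^ 2)
  have hs : 0 < s := Real.sqrt_pos.2 (by positivity)
  have hs_lt : s < h ^ 2 + 2 * k ^ 2 + h ^ 2 := by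
    rw [Real.sqrt_lt' (by positivity)]
    nlinarith [mul_pos (mul_pos hh hh) (mul_pos hk hk), pow_pos hh 4]
  have key : k * (1 - Real.cos (2 * θ)) - h * Real.sin (2 * θ) =
      k * (s - (h ^ 2 + 2 * k ^ 2 + h ^ 2)) / s := by
    rw [hcos, hsin]
    field_simp
    ring
  rw [key]
  exact div_neg_of_neg_of_pos (mul_neg_of_pos_of_neg hk (by linarith)) hs

lemma optimal_angle_nonfaithful_pos {k h θ : ℝ} (hk : 0 < k) (hh : 0 < h)
    (hsin : Real.sin (2 * θ) = h * k / √((h ^ 2 + 2 * k ^ 2) ^ 2 + (h * k) ^ 2)) :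
    0 < k * (1 - Real.cos (2 * θ)) + h * Real.sin (2 * θ) := by
  have hs : 0 < Real.sin (2 * θ) := by
    rw [hsin]
    exact div_pos (mul_pos hh hk) (Real.sqrt_pos.2 (by positivity))
  nlinarith [Real.cos_le_one (2 * θ)]

/-- State distinguishability via the interaction term: at the QET-optimal
angle, `Tr[ρ(μ,μ,θ)·V] < 0` (faithful) and `Tr[ρ(μ,−μ,θ)·V] > 0` (non-faithful). -/
theorem qet_distinguish_V (k h : ℝ) (hk : 0 < k) (hh : 0 < h) (θ : ℝ)
    (hcos : Real.cos (2 * θ) =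
      (h ^ 2 + 2 * k ^ 2) / Real.sqrt ((h ^ 2 + 2 * k ^ 2) ^ 2 + (h * k) ^ 2))
    (hsin : Real.sin (2 * θ) =
      h * k / Real.sqrt ((h ^ 2 + 2 * k ^ 2) ^ 2 + (h * k) ^ 2)) :
    ∀ μ ∈ ({-1, 1} : Set ℝ),
      (ρMN k h μ μ θ * Vm k h).trace < 0 ∧
      0 < (ρMN k h μ (-μ) θ * Vm k h).trace := by
  intro μ hμ
  have hμμ : μ * μ = 1 := by rcases hμ with rfl | rfl <;> norm_num
  have hμ2 : μ ^ 2 = 1 := by rw [sq, hμμ]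
  have hr : 0 < 2 * k / √(h ^ 2 + k ^ 2) :=
    div_pos (by positivity) (Real.sqrt_pos.2 (by positivity))
  constructor
  · rw [trace_ρMN_mul_Vm hk h θ hμ2 hμ2, hμμ, one_mul]
    exact_mod_cast mul_neg_of_pos_of_neg hr (optimal_angle_faithful_neg hk hh hcos hsin)
  · rw [trace_ρMN_mul_Vm hk h θ hμ2 (by rwa [neg_sq]), mul_neg, hμμ, neg_one_mul, neg_mul,
      sub_neg_eq_add]
    exact_mod_cast mul_pos hr (optimal_angle_nonfaithful_pos hk hh hsin)
end
end
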